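/- Let B, L ⊂ ℝ^ν be finite sets with #B = #L = N such that N^{-1/2}(e^{2πi b·l}) is unitary. Then for all t, s ∈ ℝ^ν, Σ_{l∈L} |χ_B(t + is − l)|² ≤ N^{-1} Σ_{b∈B} e^{4π‖b‖₂‖s‖₂}, where χ_B is extended to ℂ^ν by χ_B(z) = N^{-1} Σ_{b∈B} e^{2πi b·z}. -/

import Mathlib

open scoped Classical

/-- `χ_B` extended to `ℂ^ν`: `χ_B(z) = N^{-1} Σ_{b∈B} e^{2πi b·z}`. -/
noncomputable def chiBC {ν : ℕ} (B : Finset (EuclideanSpace ℝ (Fin ν)))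
    (z : Fin ν → ℂ) : ℂ :=
  (B.card : ℂ)⁻¹ * ∑ b ∈ B,
    Complex.exp (2 * (Real.pi : ℂ) * Complex.I * ∑ i, (b i : ℂ) * z i)

/-!
Write `χ_B(t + is - l) = N⁻¹ Σ_b c_b v_b(l)` with `c_b = e^{2πi b·(t+is)}` and
`v_b(l) = e^{-2πi b·l}`. Unitarity says the rows `v_b` are orthogonal in `ℂ^L` with squared
norm `N`, so by Pythagoras `Σ_l |Σ_b c_b v_b(l)|² = N Σ_b |c_b|² = N Σ_b e^{-4π b·s}`.
Hence `Σ_l |χ_B(t + is - l)|² = N⁻¹ Σ_b e^{-4π b·s}`, and Cauchy–Schwarz bounds `-b·s` by `‖b‖‖s‖`.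
-/

open Finset ComplexConjugate RealInnerProductSpace Complex Real

theorem sum_norm_sq_sum_mul_of_orthogonal {𝕜 ι κ : Type*} [RCLike 𝕜] [DecidableEq ι]
    {B : Finset ι} {L : Finset κ} {v : ι → κ → 𝕜} {n : ℝ}
    (hv : ∀ b ∈ B, ∀ b' ∈ B, ∑ l ∈ L, v b l * conj (v b' l) = if b = b' then (n : 𝕜) else 0)
    (c : ι → 𝕜) :
    ∑ l ∈ L, ‖∑ b ∈ B, c b * v b l‖ ^ 2 = n * ∑ b ∈ B, ‖c b‖ ^ 2 := by
  apply RCLike.ofReal_injective (K := 𝕜)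
  push_cast
  calc ∑ l ∈ L, (‖∑ b ∈ B, c b * v b l‖ : 𝕜) ^ 2
      = ∑ b ∈ B, ∑ b' ∈ B, c b * conj (c b') * ∑ l ∈ L, v b l * conj (v b' l) := by
        simp_rw [← RCLike.mul_conj, map_sum, sum_mul_sum, mul_sum, map_mul]
        rw [sum_comm]
        refine sum_congr rfl fun b _ => ?_
        rw [sum_comm]
        exact sum_congr rfl fun b' _ => sum_congr rfl fun l _ => by ring
    _ = ∑ b ∈ B, c b * conj (c b) * n := by
        refine sum_congr rfl fun b hb => ?_
        rw [sum_congr rfl fun b' hb' => by rw [hv b hb b' hb']]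
        simp [hb]
    _ = _ := by simp_rw [RCLike.mul_conj, mul_sum]; exact sum_congr rfl fun _ _ => by ring

section

variable {ν : ℕ} (b b' l s : EuclideanSpace ℝ (Fin ν)) (w : Fin ν → ℂ)

theorem exp_two_pi_I_sum_sub :
    cexp (2 * π * I * ∑ i, (b i : ℂ) * (w i - l i)) =
      cexp (2 * π * I * ∑ i, (b i : ℂ) * w i) * cexp (-(2 * π * I * ∑ i, (b i : ℂ) * l i)) := by
  rw [← Complex.exp_add]
  congr 1
  simp only [mul_sub, sum_sub_distrib]
  ring

theorem exp_neg_two_pi_I_sum_mul_conj :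
    cexp (-(2 * π * I * ∑ i, (b i : ℂ) * l i)) * conj (cexp (-(2 * π * I * ∑ i, (b' i : ℂ) * l i))) =
      cexp (((2 * π * ∑ i, l i * (b' i - b i) : ℝ) : ℂ) * I) := by
  rw [← exp_conj, ← Complex.exp_add]
  congr 1
  simp only [map_neg, map_mul, map_sum, conj_ofReal, conj_I, map_ofNat]
  push_cast
  simp only [mul_sub, sum_sub_distrib]
  simp_rw [mul_comm (l _ : ℂ)]
  ring

theorem norm_sq_exp_two_pi_I_sum_mul_add_I (t : EuclideanSpace ℝ (Fin ν)) :
    ‖cexp (2 * π * I * ∑ i, (b i : ℂ) * (t i + s i * I))‖ ^ 2 = rexp (-(4 * π * ⟪b, s⟫)) := by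
  rw [norm_exp, ← Real.exp_nat_mul]
  congr 1
  simp [re_sum, PiLp.inner_apply, mul_comm]
  ring

theorem sum_norm_sq_chiBC_eq {N : ℕ} (B L : Finset (EuclideanSpace ℝ (Fin ν)))
    (hB : B.card = N)
    (horth : ∀ b ∈ B, ∀ b' ∈ B,
      ∑ l ∈ L, cexp (((2 * π * ∑ i, l i * (b' i - b i) : ℝ) : ℂ) * I) = if b = b' then (N : ℂ) else 0)
    (t s : EuclideanSpace ℝ (Fin ν)) :
    ∑ l ∈ L, ‖chiBC B (fun j => t j + s j * I - l j)‖ ^ 2 =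
      (N : ℝ)⁻¹ * ∑ b ∈ B, rexp (-(4 * π * ⟪b, s⟫)) := by
  have hv : ∀ b ∈ B, ∀ b' ∈ B, ∑ l ∈ L, cexp (-(2 * π * I * ∑ i, (b i : ℂ) * l i)) *
      conj (cexp (-(2 * π * I * ∑ i, (b' i : ℂ) * l i))) = if b = b' then ((N : ℝ) : ℂ) else 0 := by
    simpa only [exp_neg_two_pi_I_sum_mul_conj, ofReal_natCast] using horth
  simp_rw [chiBC, hB, exp_two_pi_I_sum_sub, norm_mul, mul_pow, ← mul_sum,
    sum_norm_sq_sum_mul_of_orthogonal (n := N) hv, norm_sq_exp_two_pi_I_sum_mul_add_I, norm_inv,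
    Complex.norm_natCast]
  field_simp

end

theorem sum_chiB_sq_complex_bound_general {ν N : ℕ}
    (B L : Finset (EuclideanSpace ℝ (Fin ν)))
    (hB : B.card = N)
    (hH : ∀ b ∈ B, ∀ b' ∈ B,
      ∑ l ∈ L,
          Complex.exp ((((2 : ℝ) * Real.pi * ∑ i, l i * (b' i - b i) : ℝ) : ℂ) * Complex.I)
        = if b = b' then (N : ℂ) else 0) :
    ∀ t s : EuclideanSpace ℝ (Fin ν),
      ∑ l ∈ L, ‖chiBC B (fun j => (t j : ℂ) + (s j : ℂ) * Complex.I - (l j : ℂ))‖ ^ 2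
        ≤ (N : ℝ)⁻¹ * ∑ b ∈ B, Real.exp (4 * Real.pi * ‖b‖ * ‖s‖) := by
  intro t s
  rw [sum_norm_sq_chiBC_eq B L hB hH]
  gcongr with b
  have hbs : -(‖b‖ * ‖s‖) ≤ ⟪b, s⟫ := neg_le_of_abs_le (abs_real_inner_le_norm b s)
  nlinarith [pi_pos]

/-- If `N^{-1/2}(e^{2πi b·l})` is unitary, then for all `t, s ∈ ℝ^ν`,
`Σ_{l∈L} |χ_B(t + is − l)|² ≤ N^{-1} Σ_{b∈B} e^{4π‖b‖₂‖s‖₂}`. -/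
theorem sum_chiB_sq_complex_bound {ν N : ℕ} (hN : 0 < N)
    (B L : Finset (EuclideanSpace ℝ (Fin ν)))
    (hB : B.card = N) (hL : L.card = N)
    (hH : ∀ b ∈ B, ∀ b' ∈ B,
      ∑ l ∈ L,
          Complex.exp ((((2 : ℝ) * Real.pi * ∑ i, l i * (b' i - b i) : ℝ) : ℂ) * Complex.I)
        = if b = b' then (N : ℂ) else 0) :
    ∀ t s : EuclideanSpace ℝ (Fin ν),
      ∑ l ∈ L, ‖chiBC B (fun j => (t j : ℂ) + (s j : ℂ) * Complex.I - (l j : ℂ))‖ ^ 2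
        ≤ (N : ℝ)⁻¹ * ∑ b ∈ B, Real.exp (4 * Real.pi * ‖b‖ * ‖s‖) :=
  sum_chiB_sq_complex_bound_general B L hB hH
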